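/- arXiv:2003.00267 — 2 statements merged into one kernel-verified Lean document; each statement's English description precedes it below -/
import Mathlib

section
/- Let C be a sum closed permutation class. For every n ≥ 1, the number of affine permutations of size n belonging to aff(C) equals ∑_{π ∈ C_n} a(π), where the sum is over all permutations of size n in C. -/
/-- `σ : ℤ → ℤ` is an affine permutation of size `n` (values indexed 1,…,n). -/
def IsAffinePerm (n : ℕ) (σ : ℤ → ℤ) : Prop :=
  Function.Bijective σ ∧ (∀ i : ℤ, σ (i + n) = σ i + n) ∧
    (∑ i ∈ Finset.Icc (1 : ℤ) (n : ℤ), σ i) = ∑ i ∈ Finset.Icc (1 : ℤ) (n : ℤ), i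

/-- Bounded affine permutation of size `n`. -/
def IsBoundedAffinePerm (n : ℕ) (σ : ℤ → ℤ) : Prop :=
  IsAffinePerm n σ ∧ ∀ i : ℤ, |σ i - i| < (n : ℤ)

/-- Ordinary pattern containment. -/
def PermContains {n k : ℕ} (π : Equiv.Perm (Fin n)) (τ : Equiv.Perm (Fin k)) : Prop :=
  ∃ f : Fin k → Fin n, StrictMono f ∧ ∀ s t : Fin k, τ s < τ t ↔ π (f s) < π (f t)

/-- A function `σ : ℤ → ℤ` contains the ordinary pattern `τ`. -/
def AffContains {k : ℕ} (σ : ℤ → ℤ) (τ : Equiv.Perm (Fin k)) : Prop :=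
  ∃ f : Fin k → ℤ, StrictMono f ∧ ∀ s t : Fin k, τ s < τ t ↔ σ (f s) < σ (f t)

/-- The shift `Σ^r σ`. -/
def shiftPerm (r : ℤ) (σ : ℤ → ℤ) : ℤ → ℤ := fun i => σ (i - r) + r

/-- The infinite sum `⊕π : ℤ → ℤ` of a permutation `π` of size `n ≥ 1`,
with the convention that `π` acts (1-indexed) on `{1,…,n}`. -/
def infiniteSum {n : ℕ} (hn : 0 < n) (π : Equiv.Perm (Fin n)) : ℤ → ℤ := fun i =>
  ((π ⟨((i - 1) % (n : ℤ)).toNat, by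
      have h0 : (0 : ℤ) < (n : ℤ) := by exact_mod_cast hn
      have h1 : 0 ≤ (i - 1) % (n : ℤ) := Int.emod_nonneg _ h0.ne'
      have h2 : (i - 1) % (n : ℤ) < (n : ℤ) := Int.emod_lt_of_pos _ h0
      omega⟩ : Fin n).val : ℤ) + 1 + (n : ℤ) * ((i - 1) / (n : ℤ))

/-- `aff(C)`: all shifts of infinite sums of members of `C`. -/
def AffOfClass (C : (n : ℕ) → Set (Equiv.Perm (Fin n))) : Set (ℤ → ℤ) :=
  {σ | ∃ (m : ℕ) (hm : 0 < m) (π : Equiv.Perm (Fin m)) (r : ℤ),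
      π ∈ C m ∧ σ = shiftPerm r (infiniteSum hm π)}

/-- The direct sum `σ ⊕ ρ` of two permutations. -/
def permDirectSum {a b : ℕ} (σ : Equiv.Perm (Fin a)) (ρ : Equiv.Perm (Fin b)) :
    Equiv.Perm (Fin (a + b)) :=
  finSumFinEquiv.symm.trans ((Equiv.sumCongr σ ρ).trans finSumFinEquiv)

/-- A permutation is sum-indecomposable if it is not a sum of two permutations of nonzero size. -/
def IsSumIndecomposable {n : ℕ} (π : Equiv.Perm (Fin n)) : Prop :=
  ¬ ∃ (a b : ℕ) (_ : 0 < a) (_ : 0 < b) (h : a + b = n)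
      (σ : Equiv.Perm (Fin a)) (ρ : Equiv.Perm (Fin b)),
      π = (finCongr h).permCongr (permDirectSum σ ρ)

/-- `π` maps the first `d` positions onto the first `d` values. -/
def IsPrefixInvariant {n : ℕ} (π : Equiv.Perm (Fin n)) (d : ℕ) : Prop :=
  ∀ i : Fin n, ((π i : ℕ) < d ↔ (i : ℕ) < d)

/-- `a(π)`: the size of the first sum-indecomposable block of `π`. -/
noncomputable def firstBlockSize {n : ℕ} (π : Equiv.Perm (Fin n)) : ℕ :=
  sInf {d : ℕ | 1 ≤ d ∧ d ≤ n ∧ IsPrefixInvariant π d}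

/-- `χ(π)`: the number of sum-indecomposable blocks of `π`. -/
noncomputable def numBlocks {n : ℕ} (π : Equiv.Perm (Fin n)) : ℕ :=
  Set.ncard {d : ℕ | 1 ≤ d ∧ d ≤ n ∧ IsPrefixInvariant π d}

/-- `C` is a permutation class: it is closed under pattern containment. -/
def IsPermClass (C : (n : ℕ) → Set (Equiv.Perm (Fin n))) : Prop :=
  ∀ (n k : ℕ) (π : Equiv.Perm (Fin n)) (τ : Equiv.Perm (Fin k)),
    π ∈ C n → PermContains π τ → τ ∈ C k

/-- `C` is sum closed. -/
def IsSumClosed (C : (n : ℕ) → Set (Equiv.Perm (Fin n))) : Prop :=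
  ∀ (a b : ℕ) (σ : Equiv.Perm (Fin a)) (ρ : Equiv.Perm (Fin b)),
    σ ∈ C a → ρ ∈ C b → permDirectSum σ ρ ∈ C (a + b)

/-- The infinite increasing oscillation `𝒪`. -/
def oscillO : ℤ → ℤ := fun i => if Odd i then i + 2 else i - 2

/-- An affine permutation is decomposable if it is a shift of an infinite sum. -/
def IsDecomposableAffine (ω : ℤ → ℤ) : Prop :=
  ∃ (r : ℤ) (m : ℕ) (hm : 0 < m) (π : Equiv.Perm (Fin m)),
    ω = shiftPerm r (infiniteSum hm π)

/-- Containment of one `ℤ → ℤ` permutation in another. -/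
def ContainsAffine (ω ω' : ℤ → ℤ) : Prop :=
  ∃ φ φ' : ℤ → ℤ, StrictMono φ ∧ StrictMono φ' ∧ ∀ i : ℤ, ω (φ i) = φ' (ω' i)

/-- The inversion graph of a function `ℤ → ℤ`. -/
def invGraph (ω : ℤ → ℤ) : SimpleGraph ℤ where
  Adj i j := (i < j ∧ ω j < ω i) ∨ (j < i ∧ ω i < ω j)
  symm := ⟨fun _ _ h => Or.symm h⟩
  loopless := ⟨by rintro i (⟨h, -⟩ | ⟨h, -⟩) <;> exact lt_irrefl i h⟩

/-- Number of excedances of a permutation (1-indexed: positions `i` with `π(i) > i`). -/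
def excCount {n : ℕ} (π : Equiv.Perm (Fin n)) : ℕ :=
  (Finset.univ.filter fun i => i < π i).card

/-- Number of fixed points of a permutation. -/
def numFixedPoints {n : ℕ} (π : Equiv.Perm (Fin n)) : ℕ :=
  (Finset.univ.filter fun i => π i = i).card

/-- Eulerian number `a(n,k)`: permutations of size `n` with `k` excedances. -/
noncomputable def eulerianA (n k : ℕ) : ℕ := Nat.card {π : Equiv.Perm (Fin n) // excCount π = k}

/-- Derangement Eulerian number `d(n,k)`. -/
noncomputable def derangD (n k : ℕ) : ℕ :=
  Nat.card {π : Equiv.Perm (Fin n) // (∀ i, π i ≠ i) ∧ excCount π = k}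

/-!
An affine permutation `σ` of size `n` has cuts: positions `r` such that `σ` maps `(-∞, r]` onto
itself. If `r` is the last cut below `n`, then `σ = Σ^r ⊕π`, where `π` is the pattern of `σ` on
`r + 1, …, r + n`. When `σ = Σ^s ⊕ρ` with `ρ ∈ C`, this `π` lies in `C`, because every finite
pattern of `⊕ρ` already occurs in `ρ ⊕ ⋯ ⊕ ρ ∈ C`. The cuts of `Σ^r ⊕π` between `r` and `r + n`
are `r` shifted by the block boundaries of `π`, so `r` is the last cut below `n` exactly when
`n - a(π) ≤ r < n`: each `π ∈ Cₙ` accounts for `a(π)` elements of `aff(C)ₙ`.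
-/

open Function

section

def IsCut (σ : ℤ → ℤ) (r : ℤ) : Prop := ∀ i : ℤ, σ i ≤ r ↔ i ≤ r

lemma map_add_mul_of_map_add {σ : ℤ → ℤ} {c : ℤ} (hσ : ∀ i, σ (i + c) = σ i + c) (i k : ℤ) :
    σ (i + k * c) = σ i + k * c := by
  induction k using Int.induction_on with
  | zero => simp
  | succ k ih => rw [add_one_mul, ← add_assoc, hσ, ih, add_assoc]
  | pred k ih =>
    have := hσ (i + (-k - 1) * c)
    rw [add_assoc, ← add_one_mul, sub_add_cancel, ih] at this
    linarith

lemma IsCut.add_mul {σ : ℤ → ℤ} {c r : ℤ} (hσ : ∀ i, σ (i + c) = σ i + c) (h : IsCut σ r)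
    (k : ℤ) : IsCut σ (r + k * c) := by
  intro i
  have := map_add_mul_of_map_add hσ (i - k * c) k
  rw [sub_add_cancel] at this
  have := h (i - k * c)
  omega

variable {n : ℕ}

lemma exists_eq_mul_add_fin (hn : 0 < n) (i : ℤ) : ∃ (q : ℤ) (t : Fin n), i = q * n + t + 1 := by
  have hn' : (0 : ℤ) < n := by exact_mod_cast hn
  have h0 := Int.emod_nonneg (i - 1) hn'.ne'
  have h1 := Int.emod_lt_of_pos (i - 1) hn'
  refine ⟨(i - 1) / n, ⟨((i - 1) % n).toNat, by omega⟩, ?_⟩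
  have := Int.emod_add_mul_ediv (i - 1) n
  simp only [Int.toNat_of_nonneg h0]
  linarith [mul_comm ((i - 1) / (n : ℤ)) (n : ℤ)]

lemma eq_of_eqOn_window {σ τ : ℤ → ℤ} (hn : 0 < n) (hσ : ∀ i, σ (i + n) = σ i + n)
    (hτ : ∀ i, τ (i + n) = τ i + n) (r : ℤ) (h : ∀ t : Fin n, σ (r + t + 1) = τ (r + t + 1)) :
    σ = τ := by
  funext i
  obtain ⟨q, t, hi⟩ := exists_eq_mul_add_fin hn (i - r)
  rw [show i = r + t + 1 + q * n by linarith, map_add_mul_of_map_add hσ,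
    map_add_mul_of_map_add hτ, h]

lemma infiniteSum_apply (hn : 0 < n) (π : Equiv.Perm (Fin n)) {i q : ℤ} {t : Fin n}
    (hi : i = q * n + t + 1) : infiniteSum hn π i = q * n + π t + 1 := by
  have ht : (0 : ℤ) ≤ t := Int.natCast_nonneg _
  have ht' : (t : ℤ) < n := by exact_mod_cast t.isLt
  have hn' : (n : ℤ) ≠ 0 := by exact_mod_cast hn.ne'
  have hmod : (i - 1) % n = t := by
    rw [hi, show q * n + t + 1 - 1 = t + q * n by ring, Int.add_mul_emod_self_right,
      Int.emod_eq_of_lt ht ht']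
  have hdiv : (i - 1) / n = q := by
    rw [hi, show q * n + t + 1 - 1 = t + q * n by ring, Int.add_mul_ediv_right _ _ hn',
      Int.ediv_eq_zero_of_lt ht ht', zero_add]
  have hidx : (⟨((i - 1) % n).toNat, by omega⟩ : Fin n) = t := by
    ext
    simp [hmod]
  unfold infiniteSum
  rw [hidx, hdiv]
  ring

lemma infiniteSum_add (hn : 0 < n) (π : Equiv.Perm (Fin n)) (i : ℤ) :
    infiniteSum hn π (i + n) = infiniteSum hn π i + n := by
  obtain ⟨q, t, rfl⟩ := exists_eq_mul_add_fin hn i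
  rw [infiniteSum_apply hn π (q := q + 1) (t := t) (by ring), infiniteSum_apply hn π rfl]
  ring

lemma mul_add_fin_injective {q q' : ℤ} {t t' : Fin n} (h : q * n + t + 1 = q' * n + t' + 1) :
    q = q' ∧ t = t' := by
  have ht := t.isLt
  have ht' := t'.isLt
  have hq : q = q' := by
    rcases lt_trichotomy q q' with hlt | heq | hlt
    · nlinarith
    · exact heq
    · nlinarith
  subst hq
  exact ⟨rfl, Fin.ext (by omega)⟩

lemma infiniteSum_bijective (hn : 0 < n) (π : Equiv.Perm (Fin n)) :
    Bijective (infiniteSum hn π) := by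
  constructor
  · intro i j hij
    obtain ⟨q, t, rfl⟩ := exists_eq_mul_add_fin hn i
    obtain ⟨q', t', rfl⟩ := exists_eq_mul_add_fin hn j
    rw [infiniteSum_apply hn π rfl, infiniteSum_apply hn π rfl] at hij
    obtain ⟨rfl, htt⟩ := mul_add_fin_injective hij
    rw [π.injective htt]
  · intro v
    obtain ⟨q, s, rfl⟩ := exists_eq_mul_add_fin hn v
    exact ⟨q * n + (π.symm s : ℕ) + 1, by rw [infiniteSum_apply hn π rfl, π.apply_symm_apply]⟩

lemma infiniteSum_injective (hn : 0 < n) : Injective (infiniteSum hn) := by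
  intro π π' h
  ext t
  have := congrFun h (0 * n + t + 1)
  rw [infiniteSum_apply hn π rfl, infiniteSum_apply hn π' rfl] at this
  omega

lemma isCut_infiniteSum_iff (hn : 0 < n) (π : Equiv.Perm (Fin n)) {c : ℕ} (hc : c ≤ n) :
    IsCut (infiniteSum hn π) c ↔ IsPrefixInvariant π c := by
  constructor
  · intro h i
    have := h (0 * n + i + 1)
    rw [infiniteSum_apply hn π rfl] at this
    omega
  · intro h i
    obtain ⟨q, t, rfl⟩ := exists_eq_mul_add_fin hn i
    rw [infiniteSum_apply hn π rfl]
    rcases lt_trichotomy q 0 with hq | rfl | hq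
    · have : q * n ≤ -n := by nlinarith
      have := (π t).isLt
      have := t.isLt
      omega
    · have := h t
      omega
    · have : (n : ℤ) ≤ q * n := by nlinarith
      omega

@[simp]
lemma shiftPerm_apply (r : ℤ) (σ : ℤ → ℤ) (i : ℤ) : shiftPerm r σ i = σ (i - r) + r := rfl

lemma shiftPerm_injective (r : ℤ) : Injective (shiftPerm r) := by
  intro σ τ h
  funext i
  simpa using congrFun h (i + r)

lemma shiftPerm_bijective {σ : ℤ → ℤ} (hσ : Bijective σ) (r : ℤ) :
    Bijective (shiftPerm r σ) := by
  have : shiftPerm r σ = (· + r) ∘ σ ∘ (· - r) := rfl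
  rw [this]
  exact (Equiv.addRight r).bijective.comp (hσ.comp (Equiv.subRight r).bijective)

lemma shiftPerm_map_add {σ : ℤ → ℤ} {c : ℤ} (hσ : ∀ i, σ (i + c) = σ i + c) (r i : ℤ) :
    shiftPerm r σ (i + c) = shiftPerm r σ i + c := by
  rw [shiftPerm_apply, shiftPerm_apply, add_sub_right_comm, hσ, add_right_comm]

lemma isCut_shiftPerm_iff (σ : ℤ → ℤ) (r c : ℤ) : IsCut (shiftPerm r σ) c ↔ IsCut σ (c - r) := by
  refine ⟨fun h i => ?_, fun h i => ?_⟩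
  · have := h (i + r)
    simp only [shiftPerm_apply, add_sub_cancel_right] at this
    omega
  · have := h (i - r)
    simp only [shiftPerm_apply]
    omega

lemma Function.Periodic.sum_range_add {M : Type*} [AddCancelCommMonoid M] {h : ℤ → M}
    (hh : Periodic h n) (a b : ℤ) :
    ∑ k ∈ Finset.range n, h (a + k) = ∑ k ∈ Finset.range n, h (b + k) := by
  suffices step : ∀ a : ℤ,
      ∑ k ∈ Finset.range n, h (a + 1 + k) = ∑ k ∈ Finset.range n, h (a + k) by
    have hconst : ∀ a : ℤ, ∑ k ∈ Finset.range n, h (a + k) = ∑ k ∈ Finset.range n, h k := by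
      intro a
      induction a using Int.induction_on with
      | zero => simp
      | succ a ih => rw [step, ih]
      | pred a ih => rw [← ih, ← step, sub_add_cancel]
    rw [hconst a, hconst b]
  intro a
  have := Finset.sum_range_succ' (fun k : ℕ => h (a + k)) n
  rw [Finset.sum_range_succ, Nat.cast_zero, add_zero, ← hh a] at this
  push_cast at this
  simpa only [add_assoc, add_comm (1 : ℤ)] using (add_right_cancel this).symm

lemma sum_Icc_one_eq_sum_range {M : Type*} [AddCommMonoid M] (f : ℤ → M) :
    ∑ i ∈ Finset.Icc (1 : ℤ) n, f i = ∑ k ∈ Finset.range n, f (1 + k) := by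
  simp [Int.Icc_eq_finset_map, Finset.sum_map]

lemma isAffinePerm_shiftPerm_infiniteSum (hn : 0 < n) (π : Equiv.Perm (Fin n)) (r : ℤ) :
    IsAffinePerm n (shiftPerm r (infiniteSum hn π)) := by
  set σ := shiftPerm r (infiniteSum hn π)
  refine ⟨shiftPerm_bijective (infiniteSum_bijective hn π) r,
    shiftPerm_map_add (infiniteSum_add hn π) r, ?_⟩
  have hper : Periodic (fun i => σ i - i) n := fun i => by
    simp only [σ, shiftPerm_map_add (infiniteSum_add hn π)]
    ring
  rw [← sub_eq_zero, ← Finset.sum_sub_distrib, sum_Icc_one_eq_sum_range,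
    hper.sum_range_add 1 (r + 1), ← Fin.sum_univ_eq_sum_range (fun k => σ (r + 1 + k) - (r + 1 + k))]
  have hwindow : ∀ t : Fin n, σ (r + 1 + t) - (r + 1 + t) = (π t : ℤ) - t := fun t => by
    simp only [σ, shiftPerm_apply]
    rw [infiniteSum_apply hn π (q := 0) (t := t) (by ring)]
    ring
  simp only [hwindow, Finset.sum_sub_distrib, sub_eq_zero]
  exact Equiv.sum_comp π (fun t : Fin n => ((t : ℕ) : ℤ))

section WindowPerm

variable {σ : ℤ → ℤ} {r : ℤ}

lemma IsCut.mem_window (hσ : ∀ i, σ (i + n) = σ i + n) (hcut : IsCut σ r) (t : Fin n) :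
    r < σ (r + t + 1) ∧ σ (r + t + 1) ≤ r + n := by
  have h₁ := hcut (r + t + 1)
  have h₂ := hcut.add_mul hσ 1 (r + t + 1)
  have := t.isLt
  omega

noncomputable def windowPerm (hinj : Injective σ) (hσ : ∀ i, σ (i + n) = σ i + n)
    (hcut : IsCut σ r) : Equiv.Perm (Fin n) :=
  Equiv.ofBijective
    (fun t => ⟨(σ (r + t + 1) - r - 1).toNat, by have := hcut.mem_window hσ t; omega⟩)
    (Finite.injective_iff_bijective.mp fun t t' h => by
      have := hcut.mem_window hσ t
      have := hcut.mem_window hσ t'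
      have h' := congrArg Fin.val h
      simp only at h'
      have := hinj (show σ (r + t + 1) = σ (r + t' + 1) by omega)
      ext
      omega)

lemma windowPerm_apply (hinj : Injective σ) (hσ : ∀ i, σ (i + n) = σ i + n) (hcut : IsCut σ r)
    (t : Fin n) : ((windowPerm hinj hσ hcut t : ℕ) : ℤ) = σ (r + t + 1) - r - 1 := by
  have := hcut.mem_window hσ t
  simp only [windowPerm, Equiv.ofBijective_apply]
  omega

lemma eq_shiftPerm_infiniteSum_windowPerm (hn : 0 < n) (hinj : Injective σ)
    (hσ : ∀ i, σ (i + n) = σ i + n) (hcut : IsCut σ r) :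
    σ = shiftPerm r (infiniteSum hn (windowPerm hinj hσ hcut)) :=
  eq_of_eqOn_window hn hσ (shiftPerm_map_add (infiniteSum_add hn _) r) r fun t => by
    rw [shiftPerm_apply, infiniteSum_apply hn _ (q := 0) (t := t) (by ring), windowPerm_apply]
    ring

end WindowPerm

lemma affContains_shiftPerm_infiniteSum (hn : 0 < n) (π : Equiv.Perm (Fin n)) (r : ℤ) :
    AffContains (shiftPerm r (infiniteSum hn π)) π := by
  refine ⟨fun t => r + t + 1, fun s t hst => by simpa using hst, fun s t => ?_⟩
  simp only [shiftPerm_apply]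
  rw [infiniteSum_apply hn π (q := 0) (t := s) (by ring),
    infiniteSum_apply hn π (q := 0) (t := t) (by ring)]
  rw [Fin.lt_def]
  omega

lemma AffContains.of_shiftPerm {k : ℕ} {σ : ℤ → ℤ} {τ : Equiv.Perm (Fin k)} {r : ℤ}
    (h : AffContains (shiftPerm r σ) τ) : AffContains σ τ := by
  obtain ⟨f, hf, hτ⟩ := h
  refine ⟨fun s => f s - r, fun s t hst => by simpa using hf hst, fun s t => ?_⟩
  simpa using hτ s t

lemma permDirectSum_castAdd {a b : ℕ} (σ : Equiv.Perm (Fin a)) (ρ : Equiv.Perm (Fin b))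
    (j : Fin a) : permDirectSum σ ρ (Fin.castAdd b j) = Fin.castAdd b (σ j) := by
  simp [permDirectSum]

lemma permDirectSum_natAdd {a b : ℕ} (σ : Equiv.Perm (Fin a)) (ρ : Equiv.Perm (Fin b))
    (j : Fin b) : permDirectSum σ ρ (Fin.natAdd a j) = Fin.natAdd a (ρ j) := by
  simp [permDirectSum]

variable {m : ℕ}

def sumPow (ρ : Equiv.Perm (Fin m)) : (N : ℕ) → Equiv.Perm (Fin (m * N))
  | 0 => Equiv.refl _
  | N + 1 => permDirectSum (sumPow ρ N) ρ

lemma sumPow_mem {C : (n : ℕ) → Set (Equiv.Perm (Fin n))} (hclass : IsPermClass C)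
    (hsum : IsSumClosed C) {ρ : Equiv.Perm (Fin m)} (hρ : ρ ∈ C m) :
    ∀ N, sumPow ρ N ∈ C (m * N)
  | 0 => hclass m 0 ρ _ hρ ⟨Fin.elim0, fun s => s.elim0, fun s => s.elim0⟩
  | N + 1 => hsum _ _ _ _ (sumPow_mem hclass hsum hρ N) hρ

lemma sumPow_apply (hm : 0 < m) (ρ : Equiv.Perm (Fin m)) :
    ∀ (N : ℕ) (j : Fin (m * N)), ((sumPow ρ N j : ℕ) : ℤ) = infiniteSum hm ρ (j + 1) - 1
  | 0, j => j.elim0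
  | N + 1, j => by
    revert j
    show ∀ j : Fin (m * N + m),
      ((permDirectSum (sumPow ρ N) ρ j : ℕ) : ℤ) = infiniteSum hm ρ (j + 1) - 1
    refine Fin.addCases (fun j => ?_) (fun t => ?_)
    · rw [permDirectSum_castAdd, Fin.val_castAdd, Fin.val_castAdd]
      exact sumPow_apply hm ρ N j
    · rw [permDirectSum_natAdd, Fin.val_natAdd, Fin.val_natAdd,
        infiniteSum_apply hm ρ (q := N) (t := t) (by push_cast; ring)]
      push_cast
      ring

lemma mem_of_affContains_infiniteSum {C : (n : ℕ) → Set (Equiv.Perm (Fin n))}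
    (hclass : IsPermClass C) (hsum : IsSumClosed C) (hm : 0 < m) {ρ : Equiv.Perm (Fin m)}
    (hρ : ρ ∈ C m) {k : ℕ} {τ : Equiv.Perm (Fin k)} (h : AffContains (infiniteSum hm ρ) τ) :
    τ ∈ C k := by
  obtain ⟨f, hf, hτ⟩ := h
  set B := ∑ j, |f j|
  have hB : ∀ j, |f j| ≤ B := fun j =>
    Finset.single_le_sum (fun j _ => abs_nonneg (f j)) (Finset.mem_univ j)
  have hB₀ : 0 ≤ B := Finset.sum_nonneg fun j _ => abs_nonneg (f j)
  have hm' : (1 : ℤ) ≤ m := by exact_mod_cast hm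
  -- Translated by a multiple of the period, the positions `f` land in `[1, m * N]`,
  -- where `⊕ρ` agrees with `ρ ⊕ ⋯ ⊕ ρ`.
  set g : Fin k → ℤ := fun j => f j + (B + 1) * m
  set N := (2 * B + 1).toNat
  have hg : ∀ j, 1 ≤ g j ∧ g j ≤ ((m * N : ℕ) : ℤ) := fun j => by
    have := abs_le.mp (hB j)
    have : B ≤ B * m := le_mul_of_one_le_right hB₀ hm'
    push_cast
    rw [Int.toNat_of_nonneg (by omega)]
    constructor <;> nlinarith
  have hval : ∀ j, infiniteSum hm ρ (g j) = infiniteSum hm ρ (f j) + (B + 1) * m := fun j =>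
    map_add_mul_of_map_add (infiniteSum_add hm ρ) _ _
  let φ : Fin k → Fin (m * N) := fun j => ⟨(g j - 1).toNat, by have := hg j; omega⟩
  have hφ : ∀ j, ((sumPow ρ N (φ j) : ℕ) : ℤ) = infiniteSum hm ρ (f j) + (B + 1) * m - 1 :=
    fun j => by
      rw [sumPow_apply hm ρ N, ← hval]
      have := hg j
      congr 2
      simp only [φ]
      omega
  refine hclass _ _ (sumPow ρ N) τ (sumPow_mem hclass hsum hρ N) ⟨φ, fun s t hst => ?_, ?_⟩
  · have : g s < g t := by simp only [g]; linarith [hf hst]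
    show (g s - 1).toNat < (g t - 1).toNat
    have := hg s
    omega
  · intro s t
    rw [hτ, Fin.lt_def, ← Int.ofNat_lt, hφ, hφ]
    omega

lemma firstBlockSize_spec (hn : 0 < n) (π : Equiv.Perm (Fin n)) :
    1 ≤ firstBlockSize π ∧ firstBlockSize π ≤ n ∧ IsPrefixInvariant π (firstBlockSize π) :=
  Nat.sInf_mem (s := {d | 1 ≤ d ∧ d ≤ n ∧ IsPrefixInvariant π d}) ⟨n, hn, le_rfl, fun i => iff_of_true (π i).isLt i.isLt⟩

lemma isCut_infiniteSum_zero (hn : 0 < n) (π : Equiv.Perm (Fin n)) :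
    IsCut (infiniteSum hn π) 0 :=
  (isCut_infiniteSum_iff hn π (Nat.zero_le n)).mpr fun i => by simp

lemma isCut_infiniteSum_firstBlockSize (hn : 0 < n) (π : Equiv.Perm (Fin n)) :
    IsCut (infiniteSum hn π) (firstBlockSize π) :=
  (isCut_infiniteSum_iff hn π (firstBlockSize_spec hn π).2.1).mpr (firstBlockSize_spec hn π).2.2

lemma firstBlockSize_le_of_isCut (hn : 0 < n) (π : Equiv.Perm (Fin n)) {c : ℕ} (hc₀ : 1 ≤ c)
    (hc : c ≤ n) (h : IsCut (infiniteSum hn π) c) : firstBlockSize π ≤ c :=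
  Nat.sInf_le ⟨hc₀, hc, (isCut_infiniteSum_iff hn π hc).mp h⟩

lemma isCut_shiftPerm_infiniteSum (hn : 0 < n) (π : Equiv.Perm (Fin n)) (r : ℤ) :
    IsCut (shiftPerm r (infiniteSum hn π)) r := by
  rw [isCut_shiftPerm_iff, sub_self]
  exact isCut_infiniteSum_zero hn π

lemma shiftPerm_infiniteSum_injOn (hn : 0 < n) :
    Set.InjOn (fun p : (_ : Equiv.Perm (Fin n)) × ℕ => shiftPerm (n - p.2) (infiniteSum hn p.1))
      {p | 1 ≤ p.2 ∧ p.2 ≤ firstBlockSize p.1} := by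
  -- A cut of `Σ^{n-d'} ⊕π'` at `n - d'` would be a cut of `⊕π` at `d - d' < a(π)`.
  have hne : ∀ (π π' : Equiv.Perm (Fin n)) (d d' : ℕ), d ≤ firstBlockSize π → 1 ≤ d' → d' < d →
      shiftPerm (n - d) (infiniteSum hn π) ≠ shiftPerm (n - d') (infiniteSum hn π') := by
    intro π π' d d' hd hd' hlt heq
    have hcut := isCut_shiftPerm_infiniteSum hn π' (n - d')
    rw [← heq, isCut_shiftPerm_iff, show (n : ℤ) - d' - (n - d) = (d - d' : ℕ) by omega] at hcut
    have := firstBlockSize_le_of_isCut hn π (by omega)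
      (by have := (firstBlockSize_spec hn π).2.1; omega) hcut
    omega
  rintro ⟨π, d⟩ ⟨hd₁, hd⟩ ⟨π', d'⟩ ⟨hd₁', hd'⟩ heq
  simp only at heq hd₁ hd hd₁' hd'
  obtain hlt | rfl | hlt := lt_trichotomy d d'
  · exact absurd heq.symm (hne π' π d' d hd' hd₁ hlt)
  · rw [infiniteSum_injective hn (shiftPerm_injective _ heq)]
  · exact absurd heq (hne π π' d d' hd hd₁' hlt)

lemma exists_eq_shiftPerm_infiniteSum {C : (n : ℕ) → Set (Equiv.Perm (Fin n))}
    (hclass : IsPermClass C) (hsum : IsSumClosed C) (hn : 0 < n) {σ : ℤ → ℤ}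
    (hσ : IsAffinePerm n σ) (hσC : σ ∈ AffOfClass C) :
    ∃ π ∈ C n, ∃ d : ℕ, 1 ≤ d ∧ d ≤ firstBlockSize π ∧
      σ = shiftPerm (n - d) (infiniteSum hn π) := by
  classical
  obtain ⟨hbij, hper, -⟩ := hσ
  obtain ⟨m, hm, ρ, s, hρ, hσs⟩ := hσC
  have hn' : (0 : ℤ) < n := by exact_mod_cast hn
  have hex : ∃ d : ℕ, 0 < d ∧ IsCut σ (n - d) := by
    have hlt := Int.emod_lt_of_pos s hn'
    have hdiv := Int.emod_add_mul_ediv s n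
    refine ⟨(n - s % n).toNat, by omega, ?_⟩
    convert (hσs ▸ isCut_shiftPerm_infiniteSum hm ρ s).add_mul hper (-(s / n)) using 1
    rw [Int.toNat_of_nonneg (by omega)]
    linarith
  -- `n - d` is the last cut of `σ` before `n`.
  set d := Nat.find hex
  obtain ⟨hd₀, hcut⟩ := Nat.find_spec hex
  set π := windowPerm hbij.injective hper hcut
  have hσπ := eq_shiftPerm_infiniteSum_windowPerm hn hbij.injective hper hcut
  refine ⟨π, ?_, d, hd₀, ?_, hσπ⟩
  · have hπ := affContains_shiftPerm_infiniteSum hn π (n - d)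
    rw [← hσπ, hσs] at hπ
    exact mem_of_affContains_infiniteSum hclass hsum hm hρ hπ.of_shiftPerm
  · by_contra! hlt
    have hcut' : IsCut σ (n - (d - firstBlockSize π : ℕ)) := by
      rw [hσπ, isCut_shiftPerm_iff]
      convert isCut_infiniteSum_firstBlockSize hn π using 1
      omega
    exact Nat.find_min hex (by have := (firstBlockSize_spec hn π).1; omega) ⟨by omega, hcut'⟩

end

/-- for a sum closed permutation class `C` and `n ≥ 1`,
`|aff(C)ₙ| = ∑_{π ∈ Cₙ} a(π)`. -/
theorem stmt1 (C : (n : ℕ) → Set (Equiv.Perm (Fin n)))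
    (hclass : IsPermClass C) (hsum : IsSumClosed C) (n : ℕ) (hn : 1 ≤ n) :
    Nat.card {σ : ℤ → ℤ // IsAffinePerm n σ ∧ σ ∈ AffOfClass C} =
      ∑ π ∈ (Set.toFinite (C n)).toFinset, firstBlockSize π := by
  set Φ := fun p : (_ : Equiv.Perm (Fin n)) × ℕ => shiftPerm (n - p.2) (infiniteSum hn p.1)
  set D := (Set.toFinite (C n)).toFinset.sigma fun π => Finset.Icc 1 (firstBlockSize π)
  have hD : ∀ p, p ∈ D ↔ p.1 ∈ C n ∧ 1 ≤ p.2 ∧ p.2 ≤ firstBlockSize p.1 := by simp [D]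
  have himage : {σ | IsAffinePerm n σ ∧ σ ∈ AffOfClass C} = Φ '' D := by
    ext σ
    constructor
    · rintro ⟨hσ, hσC⟩
      obtain ⟨π, hπ, d, hd₁, hd, rfl⟩ := exists_eq_shiftPerm_infiniteSum hclass hsum hn hσ hσC
      exact ⟨⟨π, d⟩, (hD _).mpr ⟨hπ, hd₁, hd⟩, rfl⟩
    · rintro ⟨⟨π, d⟩, hp, rfl⟩
      exact ⟨isAffinePerm_shiftPerm_infiniteSum hn π _, n, hn, π, _, ((hD _).mp hp).1, rfl⟩
  calc Nat.card {σ // IsAffinePerm n σ ∧ σ ∈ AffOfClass C}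
      = (Φ '' D).ncard := by rw [← himage]; rfl
    _ = D.card := by
      rw [((shiftPerm_infiniteSum_injOn hn).mono fun p hp => ((hD p).mp hp).2).ncard_image,
        Set.ncard_coe_finset]
    _ = _ := by simp [D, Finset.card_sigma]
end

section
/- Let C be a sum closed permutation class. For every n ≥ 1, ∑_{π ∈ C_n} a(π) = n · ∑_{π ∈ C_n} 1/χ(π), as an equality of rational numbers, where both sums are over all permutations of size n in C. -/
/-!
If `d` is a breakpoint of `π`, i.e. `π = α ⊕ β` with `α` of size `d`, then the rotation
`β ⊕ α` is a sum of two patterns of `π`, hence lies in `C`. For a breakpoint `d < n` the first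
block of `β ⊕ α` has size `d' - d`, where `d'` is the next breakpoint, while rotating at `d = n`
does nothing; so the first-block sizes of the `χ(π)` rotations of `π` telescope to `n`.
Now spread `a(π)` evenly over the pairs `(π, d)`: the involution `(π, d) ↦ (β ⊕ α, n - d)`
preserves `χ`, so `∑ a(π) = ∑_{(π, d)} a(β ⊕ α) / χ(π) = ∑ n / χ(π)`.
-/

open Finset Fin.NatCast

lemma permContains_of_comp_eq {n k : ℕ} {π : Equiv.Perm (Fin n)} {τ : Equiv.Perm (Fin k)}
    {f g : Fin k → Fin n} (hf : StrictMono f) (hg : StrictMono g) (h : ∀ s, π (f s) = g (τ s)) :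
    PermContains π τ :=
  ⟨f, hf, fun s t => by rw [h, h, hg.lt_iff_lt]⟩

lemma permContains_permCongr_finCongr {m n : ℕ} (h : m = n) (σ : Equiv.Perm (Fin m)) :
    PermContains σ ((finCongr h).permCongr σ) :=
  permContains_of_comp_eq (Fin.cast_strictMono h.symm) (Fin.cast_strictMono h.symm)
    fun s => by simp

noncomputable def restrictPerm {m n : ℕ} (π : Equiv.Perm (Fin n)) (f : Fin m ↪ Fin n)
    (h : ∀ x, π x ∈ Set.range f ↔ x ∈ Set.range f) : Equiv.Perm (Fin m) :=
  (Equiv.ofInjective f f.injective).symm.permCongr (π.subtypePerm h)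

lemma apply_restrictPerm {m n : ℕ} (π : Equiv.Perm (Fin n)) (f : Fin m ↪ Fin n)
    (h : ∀ x, π x ∈ Set.range f ↔ x ∈ Set.range f) (s : Fin m) :
    f (restrictPerm π f h s) = π (f s) := by
  simp [restrictPerm, Equiv.apply_ofInjective_symm]

lemma permContains_restrictPerm {m n : ℕ} (π : Equiv.Perm (Fin n)) {f : Fin m ↪ Fin n}
    (hf : StrictMono f) (h : ∀ x, π x ∈ Set.range f ↔ x ∈ Set.range f) :
    PermContains π (restrictPerm π f h) :=
  permContains_of_comp_eq hf hf fun s => (apply_restrictPerm π f h s).symm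

lemma val_permDirectSum {a b : ℕ} (σ : Equiv.Perm (Fin a)) (ρ : Equiv.Perm (Fin b))
    (x : Fin (a + b)) :
    (permDirectSum σ ρ x).val =
      if h : x.val < a then (σ ⟨x.val, h⟩).val else a + (ρ ⟨x.val - a, by omega⟩).val := by
  split_ifs with h
  · conv_lhs => rw [show x = Fin.castAdd b ⟨x.val, h⟩ from rfl]
    simp only [permDirectSum, Equiv.trans_apply, finSumFinEquiv_symm_apply_castAdd,
      Equiv.sumCongr_apply, Sum.map_inl, finSumFinEquiv_apply_left, Fin.val_castAdd]
  · conv_lhs => rw [show x = Fin.natAdd a ⟨x.val - a, by omega⟩ from Fin.ext (by simp; omega)]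
    simp only [permDirectSum, Equiv.trans_apply, finSumFinEquiv_symm_apply_natAdd,
      Equiv.sumCongr_apply, Sum.map_inr, finSumFinEquiv_apply_right, Fin.val_natAdd]

section Parts

variable {n d : ℕ} {π : Equiv.Perm (Fin n)}

lemma IsPrefixInvariant.range_castLEEmb (hd : d ≤ n) (hπ : IsPrefixInvariant π d) (x : Fin n) :
    π x ∈ Set.range (Fin.castLEEmb hd) ↔ x ∈ Set.range (Fin.castLEEmb hd) := by
  simpa [Fin.range_castLE] using hπ x

noncomputable def prefixPart (hd : d ≤ n) (hπ : IsPrefixInvariant π d) : Equiv.Perm (Fin d) :=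
  restrictPerm π (Fin.castLEEmb hd) (hπ.range_castLEEmb hd)

lemma IsPrefixInvariant.range_natAdd_castLEEmb (hd : d ≤ n) (hπ : IsPrefixInvariant π d)
    (x : Fin n) :
    π x ∈ Set.range (Fin.natAdd_castLEEmb (Nat.sub_le n d)) ↔
      x ∈ Set.range (Fin.natAdd_castLEEmb (Nat.sub_le n d)) := by
  simp only [Fin.range_natAdd_castLEEmb, Set.mem_ofPred_eq, Nat.sub_sub_self hd]
  have := hπ x
  omega

noncomputable def suffixPart (hd : d ≤ n) (hπ : IsPrefixInvariant π d) :
    Equiv.Perm (Fin (n - d)) :=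
  restrictPerm π (Fin.natAdd_castLEEmb (Nat.sub_le n d)) (hπ.range_natAdd_castLEEmb hd)

lemma val_prefixPart (hd : d ≤ n) (hπ : IsPrefixInvariant π d) (i : Fin d) {x : Fin n}
    (hx : x.val = i.val) : (prefixPart hd hπ i).val = (π x).val := by
  have := congrArg Fin.val
    (apply_restrictPerm π (Fin.castLEEmb hd) (hπ.range_castLEEmb hd) i)
  rw [show Fin.castLEEmb hd i = x from Fin.ext (by simp [hx])] at this
  exact this

lemma val_suffixPart (hd : d ≤ n) (hπ : IsPrefixInvariant π d) (i : Fin (n - d)) {x : Fin n}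
    (hx : x.val = i.val + d) : (suffixPart hd hπ i).val + d = (π x).val := by
  have := congrArg Fin.val (apply_restrictPerm π _ (hπ.range_natAdd_castLEEmb hd) i)
  rw [show Fin.natAdd_castLEEmb (Nat.sub_le n d) i = x from
    Fin.ext (by simp [Nat.sub_sub_self hd, hx])] at this
  simp only [Fin.natAdd_castLEEmb_apply_val, Nat.sub_sub_self hd] at this
  exact this

lemma permContains_prefixPart (hd : d ≤ n) (hπ : IsPrefixInvariant π d) :
    PermContains π (prefixPart hd hπ) :=
  permContains_restrictPerm π (Fin.strictMono_castLE hd) _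

lemma permContains_suffixPart (hd : d ≤ n) (hπ : IsPrefixInvariant π d) :
    PermContains π (suffixPart hd hπ) :=
  permContains_restrictPerm π (fun i j hij => by
    rw [Fin.lt_def] at hij ⊢; simp only [Fin.natAdd_castLEEmb_apply_val]; omega) _

end Parts

section Rotation

variable {n : ℕ} [NeZero n]

lemma val_add_natCast {d : ℕ} (hd : d ≤ n) (x : Fin n) :
    (x + (d : Fin n)).val = if x.val + d < n then x.val + d else x.val + d - n := by
  rw [Fin.val_add, Fin.val_natCast]
  rcases hd.lt_or_eq with hd | rfl
  · rw [Nat.mod_eq_of_lt hd]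
    split_ifs with h
    · exact Nat.mod_eq_of_lt h
    · rw [Nat.mod_eq_sub_mod (by omega), Nat.mod_eq_of_lt (by omega)]
  · simp [Nat.mod_eq_of_lt x.isLt]

lemma val_sub_natCast {d : ℕ} (hd : d ≤ n) (y : Fin n) :
    (y - (d : Fin n)).val = if d ≤ y.val then y.val - d else y.val + n - d := by
  rw [Fin.val_sub, Fin.val_natCast]
  rcases hd.lt_or_eq with hd | rfl
  · rw [Nat.mod_eq_of_lt hd]
    split_ifs with h
    · rw [show n - d + y.val = y.val - d + n by omega, Nat.add_mod_right,
        Nat.mod_eq_of_lt (by omega)]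
    · exact (Nat.mod_eq_of_lt (by omega)).trans (by omega)
  · simp [Nat.mod_eq_of_lt y.isLt]

/-- If `π = α ⊕ β` with `α` of size `d`, this is `β ⊕ α`. -/
def rotatePerm (d : ℕ) (π : Equiv.Perm (Fin n)) : Equiv.Perm (Fin n) :=
  (Equiv.subRight (d : Fin n)).permCongr π

lemma rotatePerm_apply (d : ℕ) (π : Equiv.Perm (Fin n)) (x : Fin n) :
    rotatePerm d π x = π (x + d) - d := rfl

lemma rotatePerm_rotatePerm (d e : ℕ) (π : Equiv.Perm (Fin n)) :
    rotatePerm e (rotatePerm d π) = rotatePerm (e + d) π := by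
  ext x
  simp only [rotatePerm_apply, Nat.cast_add]
  rw [sub_sub, add_comm (d : Fin n), add_assoc]

lemma rotatePerm_of_dvd {d : ℕ} (h : n ∣ d) (π : Equiv.Perm (Fin n)) : rotatePerm d π = π := by
  ext x
  simp [rotatePerm_apply, (Fin.natCast_eq_zero).2 h]

lemma rotatePerm_eq_permDirectSum {π : Equiv.Perm (Fin n)} {d : ℕ} (hd : d ≤ n)
    (hπ : IsPrefixInvariant π d) :
    rotatePerm d π = (finCongr (Nat.sub_add_cancel hd)).permCongr
      (permDirectSum (suffixPart hd hπ) (prefixPart hd hπ)) := by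
  ext x
  have hy := val_add_natCast hd x
  have hπy := hπ (x + d)
  simp only [rotatePerm_apply, val_sub_natCast hd, Equiv.permCongr_apply, finCongr_symm,
    finCongr_apply, Fin.val_cast, val_permDirectSum]
  rcases Nat.lt_or_ge x.val (n - d) with h | h
  · have := val_suffixPart hd hπ ⟨x.val, h⟩ (x := x + d) (by rw [hy, if_pos (by omega)])
    rw [dif_pos h]
    split_ifs at hy ⊢ <;> omega
  · have := val_prefixPart hd hπ ⟨x.val - (n - d), by omega⟩ (x := x + d)
      (by rw [hy, if_neg (by omega)]; simp only; omega)
    rw [dif_neg (by omega)]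
    split_ifs at hy ⊢ <;> omega

theorem rotatePerm_mem {π : Equiv.Perm (Fin n)} {d : ℕ} {C : (n : ℕ) → Set (Equiv.Perm (Fin n))}
    (hclass : IsPermClass C) (hsum : IsSumClosed C) (hπC : π ∈ C n) (hd : d ≤ n)
    (hπ : IsPrefixInvariant π d) :
    rotatePerm d π ∈ C n := by
  have hsum' := hsum _ _ _ _ (hclass _ _ π _ hπC (permContains_suffixPart hd hπ))
    (hclass _ _ π _ hπC (permContains_prefixPart hd hπ))
  rw [rotatePerm_eq_permDirectSum hd hπ]
  exact hclass _ _ _ _ hsum' (permContains_permCongr_finCongr _ _)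

end Rotation

section Breakpoints

variable {n : ℕ}

instance (π : Equiv.Perm (Fin n)) : DecidablePred (IsPrefixInvariant π) :=
  fun _ => inferInstanceAs (Decidable (∀ _, _ ↔ _))

def breakpoints (π : Equiv.Perm (Fin n)) : Finset ℕ := {d ∈ Icc 1 n | IsPrefixInvariant π d}

lemma mem_breakpoints {π : Equiv.Perm (Fin n)} {d : ℕ} :
    d ∈ breakpoints π ↔ 1 ≤ d ∧ d ≤ n ∧ IsPrefixInvariant π d := by
  simp [breakpoints, and_assoc]

lemma coe_breakpoints (π : Equiv.Perm (Fin n)) :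
    (breakpoints π : Set ℕ) = {d | 1 ≤ d ∧ d ≤ n ∧ IsPrefixInvariant π d} := by
  ext
  simp [mem_breakpoints]

lemma numBlocks_eq_card_breakpoints (π : Equiv.Perm (Fin n)) : numBlocks π = #(breakpoints π) := by
  rw [numBlocks, ← coe_breakpoints, Set.ncard_coe_finset]

lemma isPrefixInvariant_self (π : Equiv.Perm (Fin n)) : IsPrefixInvariant π n :=
  fun i => by simp [i.isLt, (π i).isLt]

variable [NeZero n]

lemma isGreatest_breakpoints (π : Equiv.Perm (Fin n)) : IsGreatest (breakpoints π : Set ℕ) n :=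
  ⟨mem_breakpoints.2 ⟨NeZero.one_le, le_rfl, isPrefixInvariant_self π⟩,
    fun _ hd => (mem_breakpoints.1 hd).2.1⟩

lemma isLeast_firstBlockSize (π : Equiv.Perm (Fin n)) :
    IsLeast (breakpoints π : Set ℕ) (firstBlockSize π) := by
  rw [firstBlockSize, ← coe_breakpoints]
  exact isLeast_csInf ⟨n, (isGreatest_breakpoints π).1⟩

end Breakpoints

section RotatedBreakpoints

variable {n : ℕ} {π : Equiv.Perm (Fin n)} {d : ℕ}

/-- Addition modulo `n`, with representatives in `1, …, n`. -/
def cycAdd (n d e : ℕ) : ℕ := if e + d ≤ n then e + d else e + d - n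

/-- The `d'` in `1, …, n` with `d' + d ≡ 0 (mod n)`. -/
def complShift (n d : ℕ) : ℕ := if d = n then n else n - d

lemma complShift_complShift (hd₁ : 1 ≤ d) (hd : d ≤ n) : complShift n (complShift n d) = d := by
  unfold complShift; split_ifs <;> omega

variable [NeZero n]

lemma isPrefixInvariant_rotatePerm_iff (hd : d ≤ n) (hπ : IsPrefixInvariant π d) {e : ℕ}
    (he : e ≤ n) : IsPrefixInvariant (rotatePerm d π) e ↔ IsPrefixInvariant π (cycAdd n d e) := by
  have reindex : IsPrefixInvariant (rotatePerm d π) e ↔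
      ∀ y : Fin n, ((π y - d).val < e ↔ (y - d).val < e) :=
    ⟨fun h y => by simpa [rotatePerm_apply] using h (y - d),
      fun h x => by simpa [rotatePerm_apply] using h (x + d)⟩
  rw [reindex]
  refine forall_congr' fun y => ?_
  have := hπ y
  rw [val_sub_natCast hd, val_sub_natCast hd]
  unfold cycAdd
  split_ifs <;> omega

lemma mem_breakpoints_rotatePerm (hd : d ∈ breakpoints π) {e : ℕ} :
    e ∈ breakpoints (rotatePerm d π) ↔ 1 ≤ e ∧ e ≤ n ∧ cycAdd n d e ∈ breakpoints π := by
  obtain ⟨-, hdn, hπ⟩ := mem_breakpoints.1 hd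
  have hbounds : 1 ≤ e → e ≤ n → 1 ≤ cycAdd n d e ∧ cycAdd n d e ≤ n := by
    unfold cycAdd; split_ifs <;> omega
  simp only [mem_breakpoints]
  constructor
  · rintro ⟨he1, hen, h⟩
    exact ⟨he1, hen, hbounds he1 hen |>.1, hbounds he1 hen |>.2,
      (isPrefixInvariant_rotatePerm_iff hdn hπ hen).1 h⟩
  · rintro ⟨he1, hen, -, -, h⟩
    exact ⟨he1, hen, (isPrefixInvariant_rotatePerm_iff hdn hπ hen).2 h⟩

lemma rotatePerm_complShift_rotatePerm (hd : d ≤ n) (π : Equiv.Perm (Fin n)) :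
    rotatePerm (complShift n d) (rotatePerm d π) = π := by
  rw [rotatePerm_rotatePerm, rotatePerm_of_dvd]
  unfold complShift
  split_ifs with h
  · exact h ▸ dvd_add dvd_rfl dvd_rfl
  · rw [Nat.sub_add_cancel hd]

lemma complShift_mem_breakpoints_rotatePerm (hd : d ∈ breakpoints π) :
    complShift n d ∈ breakpoints (rotatePerm d π) := by
  obtain ⟨hd1, hdn, -⟩ := mem_breakpoints.1 hd
  rw [mem_breakpoints_rotatePerm hd]
  have : cycAdd n d (complShift n d) = n := by unfold cycAdd complShift; split_ifs <;> omega
  refine ⟨by unfold complShift; split_ifs <;> omega, by unfold complShift; split_ifs <;> omega, ?_⟩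
  rw [this]
  exact (isGreatest_breakpoints π).1

lemma card_breakpoints_rotatePerm (hd : d ∈ breakpoints π) :
    #(breakpoints (rotatePerm d π)) = #(breakpoints π) := by
  obtain ⟨hd1, hdn, -⟩ := mem_breakpoints.1 hd
  refine card_nbij' (cycAdd n d) (cycAdd n (complShift n d)) (fun e he => ?_) (fun b hb => ?_)
    (fun e he => ?_) (fun b hb => ?_)
  · exact ((mem_breakpoints_rotatePerm hd).1 he).2.2
  · obtain ⟨hb1, hbn, -⟩ := mem_breakpoints.1 hb
    rw [Finset.mem_coe, mem_breakpoints_rotatePerm hd]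
    have : cycAdd n d (cycAdd n (complShift n d) b) = b := by
      unfold cycAdd complShift; split_ifs <;> omega
    refine ⟨?_, ?_, this.symm ▸ hb⟩ <;> unfold cycAdd complShift <;> split_ifs <;> omega
  · obtain ⟨he1, hen, -⟩ := (mem_breakpoints_rotatePerm hd).1 he
    unfold cycAdd complShift; split_ifs <;> omega
  · obtain ⟨hb1, hbn, -⟩ := mem_breakpoints.1 hb
    unfold cycAdd complShift; split_ifs <;> omega

end RotatedBreakpoints

section Telescoping

/-- Junk value `0` when no element of `s` exceeds `d`. -/
noncomputable def nextAbove (s : Finset ℕ) (d : ℕ) : ℕ := sInf {b | b ∈ s ∧ d < b}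

variable {s : Finset ℕ} {d b : ℕ}

lemma nextAbove_mem_and_lt (hb : b ∈ s) (hdb : d < b) : nextAbove s d ∈ s ∧ d < nextAbove s d :=
  Nat.sInf_mem (s := {b | b ∈ s ∧ d < b}) ⟨b, hb, hdb⟩

lemma nextAbove_le (hb : b ∈ s) (hdb : d < b) : nextAbove s d ≤ b :=
  Nat.sInf_le ⟨hb, hdb⟩

lemma sum_nextAbove_sub_add {a m : ℕ} (ha : IsLeast (s : Set ℕ) a)
    (hm : IsGreatest (s : Set ℕ) m) :
    ∑ d ∈ s.erase m, (nextAbove s d - d) + a = m := by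
  have hnext : ∀ d ∈ s.erase m, nextAbove s d ∈ s ∧ d < nextAbove s d := fun d hd =>
    nextAbove_mem_and_lt hm.1 (lt_of_le_of_ne (hm.2 (mem_of_mem_erase hd)) (ne_of_mem_erase hd))
  -- `nextAbove s` is a bijection from `s \ {m}` onto `s \ {a}`
  have hbij : ∑ d ∈ s.erase m, nextAbove s d = ∑ b ∈ s.erase a, b := by
    refine sum_bij (fun d _ => nextAbove s d) (fun d hd => ?_) (fun d₁ hd₁ d₂ hd₂ h => ?_)
      (fun b hb => ?_) (fun _ _ => rfl)
    · have := ha.2 (mem_of_mem_erase hd)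
      exact mem_erase.2 ⟨by have := (hnext d hd).2; omega, (hnext d hd).1⟩
    · by_contra hne
      rcases lt_or_gt_of_ne hne with h' | h'
      · have := nextAbove_le (mem_of_mem_erase hd₂) h'
        have := (hnext d₂ hd₂).2
        omega
      · have := nextAbove_le (mem_of_mem_erase hd₁) h'
        have := (hnext d₁ hd₁).2
        omega
    · have hab : a < b := lt_of_le_of_ne (ha.2 (mem_of_mem_erase hb)) (ne_of_mem_erase hb).symm
      have hne : (s.filter (· < b)).Nonempty := ⟨a, mem_filter.2 ⟨ha.1, hab⟩⟩
      obtain ⟨hds, hdb⟩ := mem_filter.1 ((s.filter (· < b)).max'_mem hne)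
      set d := (s.filter (· < b)).max' hne
      have hdm : d ≠ m := (lt_of_lt_of_le hdb (hm.2 (mem_of_mem_erase hb))).ne
      refine ⟨d, mem_erase.2 ⟨hdm, hds⟩, le_antisymm (nextAbove_le (mem_of_mem_erase hb) hdb) ?_⟩
      obtain ⟨hnext_mem, hd_lt⟩ := hnext d (mem_erase.2 ⟨hdm, hds⟩)
      by_contra! hlt
      have := (s.filter (· < b)).le_max' _ (mem_filter.2 ⟨hnext_mem, hlt⟩)
      omega
  have hsub : ∑ d ∈ s.erase m, (nextAbove s d - d) + ∑ d ∈ s.erase m, d =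
      ∑ d ∈ s.erase m, nextAbove s d := by
    rw [← sum_add_distrib]
    exact sum_congr rfl fun d hd => Nat.sub_add_cancel (hnext d hd).2.le
  have hm' := sum_erase_add s (fun d => d) hm.1
  have ha' := sum_erase_add s (fun d => d) ha.1
  omega

end Telescoping

section GapSum

variable {n : ℕ} [NeZero n] {π : Equiv.Perm (Fin n)} {d : ℕ}

lemma firstBlockSize_rotatePerm (hd : d ∈ breakpoints π) (hdn : d < n) :
    firstBlockSize (rotatePerm d π) = nextAbove (breakpoints π) d - d := by
  obtain ⟨hnext, hdnext⟩ := nextAbove_mem_and_lt (isGreatest_breakpoints π).1 hdn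
  have hle := (isGreatest_breakpoints π).2 hnext
  refine (isLeast_firstBlockSize _).unique ⟨?_, fun e he => ?_⟩
  · have : cycAdd n d (nextAbove (breakpoints π) d - d) = nextAbove (breakpoints π) d := by
      unfold cycAdd; split_ifs <;> omega
    exact (mem_breakpoints_rotatePerm hd).2 ⟨by omega, by omega, this.symm ▸ hnext⟩
  · obtain ⟨he1, hen, he⟩ := (mem_breakpoints_rotatePerm hd).1 he
    unfold cycAdd at he
    split_ifs at he
    · have := nextAbove_le he (by omega : d < e + d)
      omega
    · omega

lemma sum_firstBlockSize_rotatePerm (π : Equiv.Perm (Fin n)) :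
    ∑ d ∈ breakpoints π, firstBlockSize (rotatePerm d π) = n := by
  have hn := isGreatest_breakpoints π
  rw [← sum_erase_add _ _ hn.1, rotatePerm_of_dvd dvd_rfl,
    sum_congr rfl fun d hd => firstBlockSize_rotatePerm (mem_of_mem_erase hd)
      (lt_of_le_of_ne (hn.2 (mem_of_mem_erase hd)) (ne_of_mem_erase hd))]
  exact sum_nextAbove_sub_add (isLeast_firstBlockSize π) hn

end GapSum

theorem sum_firstBlockSize_eq_sum_div_card {n : ℕ} [NeZero n] (F : Finset (Equiv.Perm (Fin n)))
    (hF : ∀ π ∈ F, ∀ d ∈ breakpoints π, rotatePerm d π ∈ F) :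
    ∑ π ∈ F, (firstBlockSize π : ℚ) = ∑ π ∈ F, (n : ℚ) / #(breakpoints π) := by
  have hcard (π : Equiv.Perm (Fin n)) : (#(breakpoints π) : ℚ) ≠ 0 :=
    Nat.cast_ne_zero.2 (card_ne_zero_of_mem (isGreatest_breakpoints π).1)
  calc ∑ π ∈ F, (firstBlockSize π : ℚ)
      = ∑ p ∈ F.sigma breakpoints, (firstBlockSize p.1 : ℚ) / #(breakpoints p.1) := by
        rw [sum_sigma]
        refine sum_congr rfl fun π _ => ?_
        dsimp only
        rw [← sum_div, sum_const, nsmul_eq_mul, mul_div_cancel_left₀ _ (hcard π)]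
    _ = ∑ p ∈ F.sigma breakpoints,
          (firstBlockSize (rotatePerm p.2 p.1) : ℚ) / #(breakpoints p.1) := by
        refine sum_nbij' (fun p => ⟨rotatePerm p.2 p.1, complShift n p.2⟩)
          (fun p => ⟨rotatePerm p.2 p.1, complShift n p.2⟩) ?_ ?_ ?_ ?_ ?_
        all_goals
          rintro ⟨π, d⟩ hp
          obtain ⟨hπ, hd⟩ := mem_sigma.1 hp
          obtain ⟨hd1, hdn, -⟩ := mem_breakpoints.1 hd
        · exact mem_sigma.2 ⟨hF π hπ d hd, complShift_mem_breakpoints_rotatePerm hd⟩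
        · exact mem_sigma.2 ⟨hF π hπ d hd, complShift_mem_breakpoints_rotatePerm hd⟩
        · exact Sigma.ext (rotatePerm_complShift_rotatePerm hdn π)
            (heq_of_eq (complShift_complShift hd1 hdn))
        · exact Sigma.ext (rotatePerm_complShift_rotatePerm hdn π)
            (heq_of_eq (complShift_complShift hd1 hdn))
        · simp only [rotatePerm_complShift_rotatePerm hdn π, card_breakpoints_rotatePerm hd]
    _ = ∑ π ∈ F, (n : ℚ) / #(breakpoints π) := by
        rw [sum_sigma]
        refine sum_congr rfl fun π _ => ?_
        dsimp only
        rw [← sum_div, ← Nat.cast_sum, sum_firstBlockSize_rotatePerm]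

/-- `∑_{π ∈ Cₙ} a(π) = n·∑_{π ∈ Cₙ} 1/χ(π)` in `ℚ`. -/
theorem stmt6 (C : (n : ℕ) → Set (Equiv.Perm (Fin n)))
    (hclass : IsPermClass C) (hsum : IsSumClosed C) (n : ℕ) (hn : 1 ≤ n) :
    (∑ π ∈ (Set.toFinite (C n)).toFinset, (firstBlockSize π : ℚ)) =
      (n : ℚ) * ∑ π ∈ (Set.toFinite (C n)).toFinset, (1 / (numBlocks π : ℚ)) := by
  have : NeZero n := ⟨by omega⟩
  rw [sum_firstBlockSize_eq_sum_div_card _ fun π hπ d hd => ?_, mul_sum]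
  · simp_rw [numBlocks_eq_card_breakpoints, mul_one_div]
  · obtain ⟨-, hdn, hπd⟩ := mem_breakpoints.1 hd
    rw [Set.Finite.mem_toFinset] at hπ ⊢
    exact rotatePerm_mem hclass hsum hπ hdn hπd
end
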